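/- arXiv:math/0608601 — 7 statements merged into one kernel-verified Lean document; each statement's English description precedes it below -/
import Mathlib

section
/- Let B be a bicategory, Γ = (f, g, η, ρ) a wide right Morita context from B to A and Λ = (p, q, γ, μ) a wide right Morita context from C to B. Define η ∗ γ : (f ≫ p) ≫ (q ≫ g) ⟶ 𝟙 A as the composite η ∘ (f ◁ λ_g) ∘ (f ◁ (γ ▷ g)) ∘ (f ◁ α⁻¹) ∘ α, and μ ∗ ρ : (q ≫ g) ≫ (f ≫ p) ⟶ 𝟙 C as μ ∘ (q ◁ λ_p) ∘ (q ◁ (ρ ▷ p)) ∘ (q ◁ α⁻¹) ∘ α. Then (f ≫ p, q ≫ g, η ∗ γ, μ ∗ ρ) is a wide right Morita context from C to A. -/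
/-!
STATEMENT 4: The product of two wide right Morita contexts, with the 2-cells
η ∗ γ and μ ∗ ρ defined via associators, unitors and whiskering, is again a
wide right Morita context.
-/

open CategoryTheory Bicategory

/-- The two compatibility diagrams of a wide right Morita context (f, g, η, ρ). -/
def IsWRMC {B : Type*} [Bicategory B] {a b : B} (f : a ⟶ b) (g : b ⟶ a)
    (η : f ≫ g ⟶ 𝟙 a) (ρ : g ≫ f ⟶ 𝟙 b) : Prop :=
  ((ρ ▷ g) ≫ (λ_ g).hom = (α_ g f g).hom ≫ (g ◁ η) ≫ (ρ_ g).hom) ∧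
  ((α_ f g f).hom ≫ (f ◁ ρ) ≫ (ρ_ f).hom = (η ▷ f) ≫ (λ_ f).hom)

/-- The 2-cell `η ∗ γ : (f ≫ p) ≫ (q ≫ g) ⟶ 𝟙 a`, i.e. the composite
`η ∘ (f ◁ λ_g) ∘ (f ◁ (γ ▷ g)) ∘ (f ◁ α⁻¹) ∘ α`. -/
def star {B : Type*} [Bicategory B] {a b c : B} {f : a ⟶ b} {g : b ⟶ a}
    {p : b ⟶ c} {q : c ⟶ b} (η : f ≫ g ⟶ 𝟙 a) (γ : p ≫ q ⟶ 𝟙 b) :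
    (f ≫ p) ≫ (q ≫ g) ⟶ 𝟙 a :=
  (α_ f p (q ≫ g)).hom ≫ (f ◁ (α_ p q g).inv) ≫ (f ◁ (γ ▷ g)) ≫
    (f ◁ (λ_ g).hom) ≫ η

def IsWRMCTriangle {B : Type*} [Bicategory B] {a b : B} (f : a ⟶ b) (g : b ⟶ a)
    (η : f ≫ g ⟶ 𝟙 a) (ρ : g ≫ f ⟶ 𝟙 b) : Prop :=
  (α_ f g f).hom ≫ (f ◁ ρ) ≫ (ρ_ f).hom = (η ▷ f) ≫ (λ_ f).hom

theorem isWRMC_iff_triangle {B : Type*} [Bicategory B] {a b : B} {f : a ⟶ b} {g : b ⟶ a}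
    {η : f ≫ g ⟶ 𝟙 a} {ρ : g ≫ f ⟶ 𝟙 b} :
    IsWRMC f g η ρ ↔ IsWRMCTriangle g f ρ η ∧ IsWRMCTriangle f g η ρ :=
  ⟨fun h => ⟨h.1.symm, h.2⟩, fun h => ⟨h.1.symm, h.2⟩⟩

/- Once Λ's triangle has been inserted, `γ` and `ρ` act on disjoint factors of `f ≫ p ≫ q ≫ g ≫ f ≫ p`,
so they can be interchanged, which brings `f ◁ ρ` next to `ρ_ f` and lets Γ's triangle finish. -/
theorem IsWRMCTriangle.star {B : Type*} [Bicategory B] {a b c : B}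
    {f : a ⟶ b} {g : b ⟶ a} {p : b ⟶ c} {q : c ⟶ b}
    {η : f ≫ g ⟶ 𝟙 a} {ρ : g ≫ f ⟶ 𝟙 b} {γ : p ≫ q ⟶ 𝟙 b} {μ : q ≫ p ⟶ 𝟙 c}
    (hΓ : IsWRMCTriangle f g η ρ) (hΛ : IsWRMCTriangle p q γ μ) :
    IsWRMCTriangle (f ≫ p) (q ≫ g) (star η γ) (star μ ρ) := by
  have hΓ' : (f ◁ ρ) ≫ (ρ_ f).hom = (α_ f g f).inv ≫ (η ▷ f) ≫ (λ_ f).hom :=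
    (Iso.eq_inv_comp _).mpr hΓ
  have hΛ' : (p ◁ μ) ≫ (ρ_ p).hom = (α_ p q p).inv ≫ (γ ▷ p) ≫ (λ_ p).hom :=
    (Iso.eq_inv_comp _).mpr hΛ
  unfold IsWRMCTriangle
  calc (α_ (f ≫ p) (q ≫ g) (f ≫ p)).hom ≫ ((f ≫ p) ◁ _root_.star μ ρ) ≫ (ρ_ (f ≫ p)).hom
      = 𝟙 _ ⊗≫ f ◁ ((p ≫ q) ◁ (ρ ▷ p)) ⊗≫ f ◁ ((p ◁ μ) ≫ (ρ_ p).hom) ⊗≫ 𝟙 (f ≫ p) := by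
        unfold _root_.star; bicategory
    _ = 𝟙 _ ⊗≫ f ◁ (((p ≫ q) ◁ (ρ ▷ p)) ≫ (γ ▷ (𝟙 b ≫ p))) ⊗≫ 𝟙 (f ≫ p) := by
        rw [hΛ']; bicategory
    _ = 𝟙 _ ⊗≫ f ◁ ((γ ▷ ((g ≫ f) ≫ p)) ≫ (𝟙 b ◁ (ρ ▷ p))) ⊗≫ 𝟙 (f ≫ p) := by
        rw [whisker_exchange]
    _ = 𝟙 _ ⊗≫ f ◁ (γ ▷ ((g ≫ f) ≫ p)) ⊗≫ (((f ◁ ρ) ≫ (ρ_ f).hom) ▷ p) ⊗≫ 𝟙 (f ≫ p) := by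
        bicategory
    _ = (_root_.star η γ ▷ (f ≫ p)) ≫ (λ_ (f ≫ p)).hom := by
        rw [hΓ']; unfold _root_.star; bicategory

theorem wideMorita_stmt4 {B : Type*} [Bicategory B] {a b c : B}
    {f : a ⟶ b} {g : b ⟶ a} {p : b ⟶ c} {q : c ⟶ b}
    (η : f ≫ g ⟶ 𝟙 a) (ρ : g ≫ f ⟶ 𝟙 b)
    (γ : p ≫ q ⟶ 𝟙 b) (μ : q ≫ p ⟶ 𝟙 c)
    (hΓ : IsWRMC f g η ρ) (hΛ : IsWRMC p q γ μ) :
    IsWRMC (f ≫ p) (q ≫ g) (star η γ) (star μ ρ) := by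
  obtain ⟨hΓ₁, hΓ₂⟩ := isWRMC_iff_triangle.mp hΓ
  obtain ⟨hΛ₁, hΛ₂⟩ := isWRMC_iff_triangle.mp hΛ
  exact isWRMC_iff_triangle.mpr ⟨hΛ₁.star hΓ₁, hΓ₂.star hΛ₂⟩
end

section
/- Let B be a bicategory. If (α, β) : Γ₁ ⟶ Γ₂ and (ς, τ) : Λ₁ ⟶ Λ₂ are morphisms of wide right Morita contexts (Γᵢ from B to A, Λᵢ from C to B), then the pair (α ⊗ ς, τ ⊗ β) (horizontal composites of 2-cells) is a morphism of wide right Morita contexts Γ₁Λ₁ ⟶ Γ₂Λ₂, where ΓΛ denotes the product context (f ≫ p, q ≫ g, η ∗ γ, μ ∗ ρ). -/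
/-!
The 2-cell `star η γ` is natural in all four 1-cells `f, g, p, q`: precomposing `star η₂ γ₂` with
the horizontal composites `(u ⊗ s) ⊗ (t ⊗ v)` gives `star (η₂ ∘ (u ⊗ v)) (γ₂ ∘ (s ⊗ t))`. The
associator moves `u` next to `f`, the left unitor moves `v` past `γ₂`, and `u` then meets `v` by
the interchange law. The hypotheses on `(u, v)` and `(s, t)` turn this into `star η₁ γ₁`.
-/

open CategoryTheory Bicategory

/-- Horizontal composite of 2-cells. -/
def hcomp {B : Type*} [Bicategory B] {a b c : B} {f f' : a ⟶ b} {g g' : b ⟶ c}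
    (u : f ⟶ f') (v : g ⟶ g') : f ≫ g ⟶ f' ≫ g' :=
  (u ▷ g) ≫ (f' ◁ v)

/-- A morphism of wide right Morita contexts (f,g,η,ρ) ⟶ (f',g',η',ρ'). -/
def IsWRMCHom {B : Type*} [Bicategory B] {a b : B} {f f' : a ⟶ b} {g g' : b ⟶ a}
    (η : f ≫ g ⟶ 𝟙 a) (ρ : g ≫ f ⟶ 𝟙 b)
    (η' : f' ≫ g' ⟶ 𝟙 a) (ρ' : g' ≫ f' ⟶ 𝟙 b)
    (u : f ⟶ f') (v : g ⟶ g') : Prop :=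
  (hcomp u v ≫ η' = η) ∧ (hcomp v u ≫ ρ' = ρ)

section

variable {B : Type*} [Bicategory B] {a b c : B}

def leftContract {p : b ⟶ c} {q : c ⟶ b} (γ : p ≫ q ⟶ 𝟙 b) (g : b ⟶ a) : p ≫ q ≫ g ⟶ g :=
  (α_ p q g).inv ≫ γ ▷ g ≫ (λ_ g).hom

lemma star_eq_leftContract {f : a ⟶ b} {g : b ⟶ a} {p : b ⟶ c} {q : c ⟶ b}
    (η : f ≫ g ⟶ 𝟙 a) (γ : p ≫ q ⟶ 𝟙 b) :
    star η γ = (α_ f p (q ≫ g)).hom ≫ f ◁ leftContract γ g ≫ η := by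
  simp only [_root_.star, leftContract, Bicategory.whiskerLeft_comp, Category.assoc]

lemma hcomp_hcomp_comp_leftContract {g₁ g₂ : b ⟶ a} {p₁ p₂ : b ⟶ c} {q₁ q₂ : c ⟶ b}
    (γ : p₂ ≫ q₂ ⟶ 𝟙 b) (s : p₁ ⟶ p₂) (t : q₁ ⟶ q₂) (v : g₁ ⟶ g₂) :
    hcomp s (hcomp t v) ≫ leftContract γ g₂ = leftContract (hcomp s t ≫ γ) g₁ ≫ v := by
  simp only [hcomp, leftContract, Bicategory.whiskerLeft_comp, Category.assoc]
  rw [associator_inv_naturality_right_assoc, whisker_exchange_assoc, leftUnitor_naturality]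
  bicategory

lemma hcomp_hcomp_comp_associator {d : B} {f₁ f₂ : a ⟶ b} {p₁ p₂ : b ⟶ c} {k₁ k₂ : c ⟶ d}
    (u : f₁ ⟶ f₂) (s : p₁ ⟶ p₂) (w : k₁ ⟶ k₂) :
    hcomp (hcomp u s) w ≫ (α_ f₂ p₂ k₂).hom = (α_ f₁ p₁ k₁).hom ≫ hcomp u (hcomp s w) := by
  simp only [hcomp]
  bicategory

lemma hcomp_comp_whiskerLeft {d : B} {f₁ f₂ : a ⟶ b} {k₁ k₂ : b ⟶ d} {g₁ g₂ : b ⟶ d}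
    (u : f₁ ⟶ f₂) {w : k₁ ⟶ k₂} {x : k₂ ⟶ g₂} {y : k₁ ⟶ g₁} {v : g₁ ⟶ g₂}
    (h : w ≫ x = y ≫ v) : hcomp u w ≫ f₂ ◁ x = f₁ ◁ y ≫ hcomp u v := by
  simp only [hcomp, Category.assoc]
  rw [← Bicategory.whiskerLeft_comp, h, Bicategory.whiskerLeft_comp, whisker_exchange_assoc]

lemma hcomp_hcomp_comp_star {f₁ f₂ : a ⟶ b} {g₁ g₂ : b ⟶ a} {p₁ p₂ : b ⟶ c} {q₁ q₂ : c ⟶ b}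
    (η : f₂ ≫ g₂ ⟶ 𝟙 a) (γ : p₂ ≫ q₂ ⟶ 𝟙 b)
    (u : f₁ ⟶ f₂) (v : g₁ ⟶ g₂) (s : p₁ ⟶ p₂) (t : q₁ ⟶ q₂) :
    hcomp (hcomp u s) (hcomp t v) ≫ star η γ = star (hcomp u v ≫ η) (hcomp s t ≫ γ) := by
  rw [star_eq_leftContract, star_eq_leftContract, reassoc_of% hcomp_hcomp_comp_associator,
    reassoc_of% hcomp_comp_whiskerLeft u (hcomp_hcomp_comp_leftContract γ s t v)]

end

theorem wideMorita_stmt6_general {B : Type*} [Bicategory B] {a b c : B}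
    {f₁ f₂ : a ⟶ b} {g₁ g₂ : b ⟶ a} {p₁ p₂ : b ⟶ c} {q₁ q₂ : c ⟶ b}
    (η₁ : f₁ ≫ g₁ ⟶ 𝟙 a) (ρ₁ : g₁ ≫ f₁ ⟶ 𝟙 b)
    (η₂ : f₂ ≫ g₂ ⟶ 𝟙 a) (ρ₂ : g₂ ≫ f₂ ⟶ 𝟙 b)
    (γ₁ : p₁ ≫ q₁ ⟶ 𝟙 b) (μ₁ : q₁ ≫ p₁ ⟶ 𝟙 c)
    (γ₂ : p₂ ≫ q₂ ⟶ 𝟙 b) (μ₂ : q₂ ≫ p₂ ⟶ 𝟙 c)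
    (u : f₁ ⟶ f₂) (v : g₁ ⟶ g₂) (s : p₁ ⟶ p₂) (t : q₁ ⟶ q₂)
    (h₁ : IsWRMCHom η₁ ρ₁ η₂ ρ₂ u v) (h₂ : IsWRMCHom γ₁ μ₁ γ₂ μ₂ s t) :
    IsWRMCHom (star η₁ γ₁) (star μ₁ ρ₁) (star η₂ γ₂) (star μ₂ ρ₂)
      (hcomp u s) (hcomp t v) :=
  ⟨by rw [hcomp_hcomp_comp_star, h₁.1, h₂.1], by rw [hcomp_hcomp_comp_star, h₂.2, h₁.2]⟩

theorem wideMorita_stmt6 {B : Type*} [Bicategory B] {a b c : B}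
    {f₁ f₂ : a ⟶ b} {g₁ g₂ : b ⟶ a} {p₁ p₂ : b ⟶ c} {q₁ q₂ : c ⟶ b}
    (η₁ : f₁ ≫ g₁ ⟶ 𝟙 a) (ρ₁ : g₁ ≫ f₁ ⟶ 𝟙 b)
    (η₂ : f₂ ≫ g₂ ⟶ 𝟙 a) (ρ₂ : g₂ ≫ f₂ ⟶ 𝟙 b)
    (γ₁ : p₁ ≫ q₁ ⟶ 𝟙 b) (μ₁ : q₁ ≫ p₁ ⟶ 𝟙 c)
    (γ₂ : p₂ ≫ q₂ ⟶ 𝟙 b) (μ₂ : q₂ ≫ p₂ ⟶ 𝟙 c)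
    (hΓ₁ : IsWRMC f₁ g₁ η₁ ρ₁) (hΓ₂ : IsWRMC f₂ g₂ η₂ ρ₂)
    (hΛ₁ : IsWRMC p₁ q₁ γ₁ μ₁) (hΛ₂ : IsWRMC p₂ q₂ γ₂ μ₂)
    (u : f₁ ⟶ f₂) (v : g₁ ⟶ g₂) (s : p₁ ⟶ p₂) (t : q₁ ⟶ q₂)
    (h₁ : IsWRMCHom η₁ ρ₁ η₂ ρ₂ u v) (h₂ : IsWRMCHom γ₁ μ₁ γ₂ μ₂ s t) :
    IsWRMCHom (star η₁ γ₁) (star μ₁ ρ₁) (star η₂ γ₂) (star μ₂ ρ₂)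
      (hcomp u s) (hcomp t v) :=
  wideMorita_stmt6_general η₁ ρ₁ η₂ ρ₂ γ₁ μ₁ γ₂ μ₂ u v s t h₁ h₂
end

section
/- Let B be a bicategory, Γ = (f,g,η,ρ) a wide right Morita context from B to A, Λ = (p,q,γ,μ) from C to B, and Ω = (u,v,θ,σ) from D to C. Then the pair of associator 2-cells (α_{f,p,u}, α⁻¹_{v,q,g}) defines an isomorphism of wide right Morita contexts (ΓΛ)Ω ≅ Γ(ΛΩ) from D to A; in particular the compatibility condition η ∗ (γ ∗ θ) ∘ (α_{f,p,u} ⊗ α⁻¹_{v,q,g}) = (η ∗ γ) ∗ θ holds. -/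
/-!
STATEMENT 7: The pair of associator 2-cells (α_{f,p,u}, α⁻¹_{v,q,g}) is an
isomorphism of wide right Morita contexts (ΓΛ)Ω ≅ Γ(ΛΩ); in particular the
compatibility conditions of a morphism of contexts hold (the 2-cells being
invertible, this is an isomorphism).
-/

open CategoryTheory Bicategory

section StarAssoc

variable {B : Type*} [Bicategory B] {a b c d : B}
  {f : a ⟶ b} {g : b ⟶ a} {p : b ⟶ c} {q : c ⟶ b} {u : c ⟶ d} {v : d ⟶ c}

theorem hcomp_comp_hcomp {f f' f'' : a ⟶ b} {g g' g'' : b ⟶ c}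
    (x : f ⟶ f') (x' : f' ⟶ f'') (y : g ⟶ g') (y' : g' ⟶ g'') :
    hcomp x y ≫ hcomp x' y' = hcomp (x ≫ x') (y ≫ y') := by
  simp only [hcomp, comp_whiskerRight, whiskerLeft_comp, Category.assoc,
    whisker_exchange_assoc]

theorem hcomp_associator_comp_star_star (η : f ≫ g ⟶ 𝟙 a) (γ : p ≫ q ⟶ 𝟙 b)
    (θ : u ≫ v ⟶ 𝟙 c) :
    hcomp (α_ f p u).hom (α_ v q g).inv ≫ star η (star γ θ) = star (star η γ) θ := by
  simp only [hcomp, _root_.star]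
  bicategory

theorem hcomp_associator_inv_comp_star_star (η : f ≫ g ⟶ 𝟙 a) (γ : p ≫ q ⟶ 𝟙 b)
    (θ : u ≫ v ⟶ 𝟙 c) :
    hcomp (α_ f p u).inv (α_ v q g).hom ≫ star (star η γ) θ = star η (star γ θ) := by
  rw [← hcomp_associator_comp_star_star, ← Category.assoc, hcomp_comp_hcomp,
    Iso.inv_hom_id, Iso.hom_inv_id]
  simp only [hcomp, id_whiskerRight, whiskerLeft_id, Category.id_comp]

end StarAssoc

theorem wideMorita_stmt7_general {B : Type*} [Bicategory B] {a b c d : B}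
    {f : a ⟶ b} {g : b ⟶ a} {p : b ⟶ c} {q : c ⟶ b} {u : c ⟶ d} {v : d ⟶ c}
    (η : f ≫ g ⟶ 𝟙 a) (ρ : g ≫ f ⟶ 𝟙 b)
    (γ : p ≫ q ⟶ 𝟙 b) (μ : q ≫ p ⟶ 𝟙 c)
    (θ : u ≫ v ⟶ 𝟙 c) (σ : v ≫ u ⟶ 𝟙 d) :
    IsWRMCHom (star (star η γ) θ) (star σ (star μ ρ))
      (star η (star γ θ)) (star (star σ μ) ρ)
      (α_ f p u).hom (α_ v q g).inv ∧
    IsIso (α_ f p u).hom ∧ IsIso (α_ v q g).inv :=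
  ⟨⟨hcomp_associator_comp_star_star η γ θ, hcomp_associator_inv_comp_star_star σ μ ρ⟩,
    inferInstance, inferInstance⟩

theorem wideMorita_stmt7 {B : Type*} [Bicategory B] {a b c d : B}
    {f : a ⟶ b} {g : b ⟶ a} {p : b ⟶ c} {q : c ⟶ b} {u : c ⟶ d} {v : d ⟶ c}
    (η : f ≫ g ⟶ 𝟙 a) (ρ : g ≫ f ⟶ 𝟙 b)
    (γ : p ≫ q ⟶ 𝟙 b) (μ : q ≫ p ⟶ 𝟙 c)
    (θ : u ≫ v ⟶ 𝟙 c) (σ : v ≫ u ⟶ 𝟙 d)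
    (hΓ : IsWRMC f g η ρ) (hΛ : IsWRMC p q γ μ) (hΩ : IsWRMC u v θ σ) :
    IsWRMCHom (star (star η γ) θ) (star σ (star μ ρ))
      (star η (star γ θ)) (star (star σ μ) ρ)
      (α_ f p u).hom (α_ v q g).inv ∧
    IsIso (α_ f p u).hom ∧ IsIso (α_ v q g).inv :=
  wideMorita_stmt7_general η ρ γ μ θ σ
end

section
/- Let C be an A-coring, D a B-coring, (M, m) a 1-cell from (D:B) to (C:A) in REM(Bim) (i.e. m : C ⊗_A M → M ⊗_B D is A–B-bilinear satisfying (M ⊗ ε_D) ∘ m = ε_C ⊗ M and (m ⊗ D) ∘ (C ⊗ m) ∘ (Δ_C ⊗ M) = (M ⊗ Δ_D) ∘ m). For every right C-comodule (X, ρ^X), the map ρ^{X⊗M} := (X ⊗ m) ∘ (ρ^X ⊗ M) : X ⊗_A M → X ⊗_A M ⊗_B D makes X ⊗_A M a right D-comodule (the push-out functor on objects). -/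
/-!
The counit law of `X ≫ M` is the counit law of `m` followed by that of `X`. For coassociativity,
the interchange law lets the second copy of `ρ^X` slide past the first `m`; coassociativity of
`ρ^X` then replaces `ρ^X` applied twice by `X ◁ Δ_C`, and the second 1-cell equation turns the
resulting `(m ▷ D) ∘ (C ◁ m) ∘ (Δ_C ▷ M)` into `(M ◁ Δ_D) ∘ m`.
-/

open CategoryTheory Bicategory

namespace CategoryTheory.Bicategory

variable {𝔅 : Type*} [Bicategory 𝔅] {a b z : 𝔅} {C : a ⟶ a} {D : b ⟶ b} {M : a ⟶ b}
  {X : z ⟶ a}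

def pushCoaction (x : X ⟶ X ≫ C) (m : C ≫ M ⟶ M ≫ D) : X ≫ M ⟶ (X ≫ M) ≫ D :=
  (x ▷ M) ≫ (α_ X C M).hom ≫ (X ◁ m) ≫ (α_ X M D).inv

theorem pushCoaction_counit {εC : C ⟶ 𝟙 a} {εD : D ⟶ 𝟙 b} {m : C ≫ M ⟶ M ≫ D}
    (hm : m ≫ (M ◁ εD) ≫ (ρ_ M).hom = (εC ▷ M) ≫ (λ_ M).hom)
    {x : X ⟶ X ≫ C} (hx : x ≫ (X ◁ εC) ≫ (ρ_ X).hom = 𝟙 X) :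
    pushCoaction x m ≫ ((X ≫ M) ◁ εD) ≫ (ρ_ (X ≫ M)).hom = 𝟙 (X ≫ M) :=
  calc pushCoaction x m ≫ ((X ≫ M) ◁ εD) ≫ (ρ_ (X ≫ M)).hom
      = (x ▷ M) ≫ (α_ X C M).hom ≫ (X ◁ (m ≫ (M ◁ εD) ≫ (ρ_ M).hom)) := by
        simp only [pushCoaction]; bicategory
    _ = (x ≫ (X ◁ εC) ≫ (ρ_ X).hom) ▷ M := by rw [hm]; bicategory
    _ = 𝟙 (X ≫ M) := by rw [hx, id_whiskerRight]

theorem pushCoaction_coassoc {ΔC : C ⟶ C ≫ C} {ΔD : D ⟶ D ≫ D} {m : C ≫ M ⟶ M ≫ D}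
    (hm : (ΔC ▷ M) ≫ (α_ C C M).hom ≫ (C ◁ m) ≫ (α_ C M D).inv ≫ (m ▷ D) ≫
      (α_ M D D).hom = m ≫ (M ◁ ΔD))
    {x : X ⟶ X ≫ C} (hx : x ≫ (x ▷ C) ≫ (α_ X C C).hom = x ≫ (X ◁ ΔC)) :
    pushCoaction x m ≫ (pushCoaction x m ▷ D) ≫ (α_ (X ≫ M) D D).hom =
      pushCoaction x m ≫ ((X ≫ M) ◁ ΔD) :=
  let mm : (C ≫ C) ≫ M ⟶ M ≫ D ≫ D :=
    (α_ C C M).hom ≫ (C ◁ m) ≫ (α_ C M D).inv ≫ (m ▷ D) ≫ (α_ M D D).hom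
  calc pushCoaction x m ≫ (pushCoaction x m ▷ D) ≫ (α_ (X ≫ M) D D).hom
      = (x ▷ M) ≫ (α_ X C M).hom ≫ ((X ◁ m) ≫ (x ▷ (M ≫ D))) ≫
          (α_ X C (M ≫ D)).hom ≫ (X ◁ (α_ C M D).inv) ≫ (X ◁ (m ▷ D)) ≫
          (X ◁ (α_ M D D).hom) ≫ (α_ X M (D ≫ D)).inv := by
        simp only [pushCoaction]; bicategory
    _ = (x ▷ M) ≫ (α_ X C M).hom ≫ ((x ▷ (C ≫ M)) ≫ ((X ≫ C) ◁ m)) ≫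
          (α_ X C (M ≫ D)).hom ≫ (X ◁ (α_ C M D).inv) ≫ (X ◁ (m ▷ D)) ≫
          (X ◁ (α_ M D D).hom) ≫ (α_ X M (D ≫ D)).inv := by
        rw [whisker_exchange]
    _ = ((x ≫ (x ▷ C) ≫ (α_ X C C).hom) ▷ M) ≫ (α_ X (C ≫ C) M).hom ≫ (X ◁ mm) ≫
          (α_ X M (D ≫ D)).inv := by
        bicategory
    _ = (x ▷ M) ≫ (α_ X C M).hom ≫ (X ◁ ((ΔC ▷ M) ≫ mm)) ≫ (α_ X M (D ≫ D)).inv := by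
        rw [hx]; bicategory
    _ = pushCoaction x m ≫ ((X ≫ M) ◁ ΔD) := by
        simp only [mm]; rw [hm, pushCoaction]; bicategory

end CategoryTheory.Bicategory

theorem wideMorita_stmt11_general {𝔅 : Type*} [Bicategory 𝔅] {a b z : 𝔅}
    -- the `A`-coring `C`
    (C : a ⟶ a) (ΔC : C ⟶ C ≫ C) (εC : C ⟶ 𝟙 a)
    -- the `B`-coring `D`
    (D : b ⟶ b) (ΔD : D ⟶ D ≫ D) (εD : D ⟶ 𝟙 b)
    -- the 1-cell `(M, m)` from `(D : b)` to `(C : a)`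
    (M : a ⟶ b) (m : C ≫ M ⟶ M ≫ D)
    (hm1 : m ≫ (M ◁ εD) ≫ (ρ_ M).hom = (εC ▷ M) ≫ (λ_ M).hom)
    (hm2 : (ΔC ▷ M) ≫ (α_ C C M).hom ≫ (C ◁ m) ≫ (α_ C M D).inv ≫ (m ▷ D) ≫
      (α_ M D D).hom = m ≫ (M ◁ ΔD))
    -- a right `C`-comodule `(X, ρ^X)`
    (X : z ⟶ a) (x : X ⟶ X ≫ C)
    (hx_counit : x ≫ (X ◁ εC) ≫ (ρ_ X).hom = 𝟙 X)
    (hx_coassoc : x ≫ (x ▷ C) ≫ (α_ X C C).hom = x ≫ (X ◁ ΔC)) :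
    -- the coaction `ρ^{X ⊗ M} = (X ⊗ m) ∘ (ρ^X ⊗ M)` on `X ≫ M` ...
    letI rXM : X ≫ M ⟶ (X ≫ M) ≫ D :=
      (x ▷ M) ≫ (α_ X C M).hom ≫ (X ◁ m) ≫ (α_ X M D).inv
    -- ... makes `X ≫ M` a right `D`-comodule:
    (rXM ≫ ((X ≫ M) ◁ εD) ≫ (ρ_ (X ≫ M)).hom = 𝟙 (X ≫ M)) ∧
    (rXM ≫ (rXM ▷ D) ≫ (α_ (X ≫ M) D D).hom = rXM ≫ ((X ≫ M) ◁ ΔD)) :=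
  ⟨pushCoaction_counit hm1 hx_counit, pushCoaction_coassoc hm2 hx_coassoc⟩

theorem wideMorita_stmt11 {𝔅 : Type*} [Bicategory 𝔅] {a b z : 𝔅}
    -- the `A`-coring `C`
    (C : a ⟶ a) (ΔC : C ⟶ C ≫ C) (εC : C ⟶ 𝟙 a)
    (hC_coassoc : ΔC ≫ (ΔC ▷ C) ≫ (α_ C C C).hom = ΔC ≫ (C ◁ ΔC))
    (hC_counit_l : ΔC ≫ (εC ▷ C) ≫ (λ_ C).hom = 𝟙 C)
    (hC_counit_r : ΔC ≫ (C ◁ εC) ≫ (ρ_ C).hom = 𝟙 C)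
    -- the `B`-coring `D`
    (D : b ⟶ b) (ΔD : D ⟶ D ≫ D) (εD : D ⟶ 𝟙 b)
    (hD_coassoc : ΔD ≫ (ΔD ▷ D) ≫ (α_ D D D).hom = ΔD ≫ (D ◁ ΔD))
    (hD_counit_l : ΔD ≫ (εD ▷ D) ≫ (λ_ D).hom = 𝟙 D)
    (hD_counit_r : ΔD ≫ (D ◁ εD) ≫ (ρ_ D).hom = 𝟙 D)
    -- the 1-cell `(M, m)` from `(D : b)` to `(C : a)`
    (M : a ⟶ b) (m : C ≫ M ⟶ M ≫ D)
    (hm1 : m ≫ (M ◁ εD) ≫ (ρ_ M).hom = (εC ▷ M) ≫ (λ_ M).hom)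
    (hm2 : (ΔC ▷ M) ≫ (α_ C C M).hom ≫ (C ◁ m) ≫ (α_ C M D).inv ≫ (m ▷ D) ≫
      (α_ M D D).hom = m ≫ (M ◁ ΔD))
    -- a right `C`-comodule `(X, ρ^X)`
    (X : z ⟶ a) (x : X ⟶ X ≫ C)
    (hx_counit : x ≫ (X ◁ εC) ≫ (ρ_ X).hom = 𝟙 X)
    (hx_coassoc : x ≫ (x ▷ C) ≫ (α_ X C C).hom = x ≫ (X ◁ ΔC)) :
    -- the coaction `ρ^{X ⊗ M} = (X ⊗ m) ∘ (ρ^X ⊗ M)` on `X ≫ M` ...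
    letI rXM : X ≫ M ⟶ (X ≫ M) ≫ D :=
      (x ▷ M) ≫ (α_ X C M).hom ≫ (X ◁ m) ≫ (α_ X M D).inv
    -- ... makes `X ≫ M` a right `D`-comodule:
    (rXM ≫ ((X ≫ M) ◁ εD) ≫ (ρ_ (X ≫ M)).hom = 𝟙 (X ≫ M)) ∧
    (rXM ≫ (rXM ▷ D) ≫ (α_ (X ≫ M) D D).hom = rXM ≫ ((X ≫ M) ◁ ΔD)) :=
  wideMorita_stmt11_general C ΔC εC D ΔD εD M m hm1 hm2 X x hx_counit hx_coassoc
end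

section
/- Let C be an A-coring, D a B-coring, and Γ = ((M,m),(N,n),η,ρ) a wide right Morita context in REM(Bim) from (D:B) to (C:A): here η : C ⊗_A M ⊗_B N → A and ρ : D ⊗_B N ⊗_A M → B are bilinear 2-cells satisfying equations (I-1),(I-2),(II-1),(II-2). For a right C-comodule (X, ρ^X), define η̃_X : X ⊗_A M ⊗_B N → X as the composite (X ⊗ η) ∘ (ρ^X ⊗ M ⊗ N) followed by X ⊗_A A ≅ X. Then η̃_X is right C-colinear, where X ⊗_A M ⊗_B N carries the composite push-out comodule structure ρ^{X⊗M⊗N} = (X ⊗ M ⊗ n) ∘ (X ⊗ m ⊗ N) ∘ (ρ^X ⊗ M ⊗ N). -/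
/-!
Both sides of the colinearity equation factor through the coaction of `X` whiskered by
`M ≫ N`: each of them applies the coaction twice, and coassociativity of `X` replaces the
second application by `Δ_C`. What remains on the two sides is `X` whiskered with the two
sides of (I-1).
-/

open CategoryTheory Bicategory

/-- The composite `C ⊗ M ⊗ N ⟶ M ⊗ N ⊗ C` built from `m` and `n`
(the comparison 2-cell for the composite 1-cell `(M, m)(N, n)`). -/
def midmap {𝔅 : Type*} [Bicategory 𝔅] {a b : 𝔅} {C : a ⟶ a} {D : b ⟶ b}
    {M : a ⟶ b} {N : b ⟶ a} (m : C ≫ M ⟶ M ≫ D) (n : D ≫ N ⟶ N ≫ C) :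
    C ≫ (M ≫ N) ⟶ (M ≫ N) ≫ C :=
  (α_ C M N).inv ≫ (m ▷ N) ≫ (α_ M D N).hom ≫ (M ◁ n) ≫ (α_ M N C).inv

section Coaction

variable {𝔅 : Type*} [Bicategory 𝔅] {a c z : 𝔅} {C : a ⟶ a} {X : z ⟶ a}

/-- In these terms `η̃_X = coactLift x η ≫ (ρ_ X).hom`, and the push-out coaction on
`X ≫ (M ≫ N)` is `coactLift x (midmap m n) ≫ (α_ X (M ≫ N) C).inv`. -/
def coactLift (x : X ⟶ X ≫ C) {Y Z : a ⟶ c} (φ : C ≫ Y ⟶ Z) : X ≫ Y ⟶ X ≫ Z :=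
  (x ▷ Y) ≫ (α_ X C Y).hom ≫ (X ◁ φ)

variable (x : X ⟶ X ≫ C)

theorem coactLift_comp_whiskerLeft {Y Z W : a ⟶ c} (φ : C ≫ Y ⟶ Z) (g : Z ⟶ W) :
    coactLift x φ ≫ (X ◁ g) = coactLift x (φ ≫ g) := by
  simp [coactLift]

theorem whiskerLeft_comp_coactLift {Y Y' Z : a ⟶ c} (f : Y ⟶ Y') (ψ : C ≫ Y' ⟶ Z) :
    (X ◁ f) ≫ coactLift x ψ = coactLift x ((C ◁ f) ≫ ψ) := by
  simp only [coactLift, whisker_exchange_assoc, associator_naturality_right_assoc,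
    whiskerLeft_comp]

theorem coactLift_whiskerRight {d : 𝔅} {Y Z : a ⟶ c} (φ : C ≫ Y ⟶ Z) (W : c ⟶ d) :
    coactLift x φ ▷ W =
      (α_ X Y W).hom ≫ coactLift x ((α_ C Y W).inv ≫ (φ ▷ W)) ≫ (α_ X Z W).inv := by
  simp only [coactLift]
  bicategory

theorem rightUnitor_hom_comp_coaction : (ρ_ X).hom ≫ x = coactLift x (ρ_ C).hom := by
  simp only [coactLift]
  rw [← rightUnitor_naturality]
  bicategory

theorem coactLift_comp_coactLift {ΔC : C ⟶ C ≫ C}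
    (hx : x ≫ (x ▷ C) ≫ (α_ X C C).hom = x ≫ (X ◁ ΔC))
    {Y Z W : a ⟶ c} (φ : C ≫ Y ⟶ Z) (ψ : C ≫ Z ⟶ W) :
    coactLift x φ ≫ coactLift x ψ =
      coactLift x ((ΔC ▷ Y) ≫ (α_ C C Y).hom ≫ (C ◁ φ) ≫ ψ) := by
  have hx' : x ≫ (x ▷ C) = x ≫ (X ◁ ΔC) ≫ (α_ X C C).inv := by
    rw [← cancel_mono (α_ X C C).hom]
    simpa using hx
  have hcoassoc : (x ▷ Y) ≫ (α_ X C Y).hom ≫ (x ▷ (C ≫ Y)) =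
      ((x ≫ (X ◁ ΔC) ≫ (α_ X C C).inv) ▷ Y) ≫ (α_ (X ≫ C) C Y).hom := by
    rw [← hx', comp_whiskerRight]
    bicategory
  calc coactLift x φ ≫ coactLift x ψ
      = (x ▷ Y) ≫ (α_ X C Y).hom ≫ coactLift x ((C ◁ φ) ≫ ψ) := by
        rw [coactLift, Category.assoc, Category.assoc, whiskerLeft_comp_coactLift]
    _ = _ := by
        simp only [coactLift]
        rw [reassoc_of% hcoassoc]
        bicategory

end Coaction

theorem wideMorita_stmt12_general {𝔅 : Type*} [Bicategory 𝔅] {a b z : 𝔅}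
    -- the `A`-coring `C`
    (C : a ⟶ a) (ΔC : C ⟶ C ≫ C)
    -- the `B`-coring `D`
    (D : b ⟶ b)
    -- the 1-cells `(M, m)` and `(N, n)`
    (M : a ⟶ b) (m : C ≫ M ⟶ M ≫ D)
    (N : b ⟶ a) (n : D ≫ N ⟶ N ≫ C)
    -- the 2-cells `η` and `ρ` of the wide right Morita context
    (η : C ≫ (M ≫ N) ⟶ 𝟙 a)
    -- equation (I-1)
    (hI1 : (ΔC ▷ (M ≫ N)) ≫ (α_ C C (M ≫ N)).hom ≫ (C ◁ midmap m n) ≫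
        (α_ C (M ≫ N) C).inv ≫ (η ▷ C) ≫ (λ_ C).hom =
      (ΔC ▷ (M ≫ N)) ≫ (α_ C C (M ≫ N)).hom ≫ (C ◁ η) ≫ (ρ_ C).hom)
    -- a right `C`-comodule `(X, ρ^X)`
    (X : z ⟶ a) (x : X ⟶ X ≫ C)
    (hx_coassoc : x ≫ (x ▷ C) ≫ (α_ X C C).hom = x ≫ (X ◁ ΔC)) :
    -- the 2-cell `η̃_X` ...
    letI etaX : X ≫ (M ≫ N) ⟶ X :=
      (x ▷ (M ≫ N)) ≫ (α_ X C (M ≫ N)).hom ≫ (X ◁ η) ≫ (ρ_ X).hom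
    -- ... is right `C`-colinear for the push-out coaction on `X ≫ (M ≫ N)`:
    letI rXMN : X ≫ (M ≫ N) ⟶ (X ≫ (M ≫ N)) ≫ C :=
      (x ▷ (M ≫ N)) ≫ (α_ X C (M ≫ N)).hom ≫ (X ◁ midmap m n) ≫
        (α_ X (M ≫ N) C).inv
    etaX ≫ x = rXMN ≫ (etaX ▷ C) := by
  have hetaX : (x ▷ (M ≫ N)) ≫ (α_ X C (M ≫ N)).hom ≫ (X ◁ η) ≫ (ρ_ X).hom =
      coactLift x η ≫ (ρ_ X).hom := by
    simp only [coactLift, Category.assoc]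
  have hrXMN : (x ▷ (M ≫ N)) ≫ (α_ X C (M ≫ N)).hom ≫ (X ◁ midmap m n) ≫
      (α_ X (M ≫ N) C).inv = coactLift x (midmap m n) ≫ (α_ X (M ≫ N) C).inv := by
    simp only [coactLift, Category.assoc]
  rw [hetaX, hrXMN]
  calc (coactLift x η ≫ (ρ_ X).hom) ≫ x
      = coactLift x ((ΔC ▷ (M ≫ N)) ≫ (α_ C C (M ≫ N)).hom ≫ (C ◁ η) ≫ (ρ_ C).hom) := by
        rw [Category.assoc, rightUnitor_hom_comp_coaction,
          coactLift_comp_coactLift x hx_coassoc]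
    _ = coactLift x ((ΔC ▷ (M ≫ N)) ≫ (α_ C C (M ≫ N)).hom ≫ (C ◁ midmap m n) ≫
          (α_ C (M ≫ N) C).inv ≫ (η ▷ C) ≫ (λ_ C).hom) := by
        rw [hI1]
    _ = (coactLift x (midmap m n) ≫ (α_ X (M ≫ N) C).inv) ≫
          ((coactLift x η ≫ (ρ_ X).hom) ▷ C) := by
        rw [comp_whiskerRight, coactLift_whiskerRight]
        simp only [Category.assoc, Iso.inv_hom_id_assoc, triangle_assoc_comp_right]
        rw [coactLift_comp_whiskerLeft, coactLift_comp_coactLift x hx_coassoc]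
        simp only [Category.assoc]

theorem wideMorita_stmt12 {𝔅 : Type*} [Bicategory 𝔅] {a b z : 𝔅}
    -- the `A`-coring `C`
    (C : a ⟶ a) (ΔC : C ⟶ C ≫ C) (εC : C ⟶ 𝟙 a)
    (hC_coassoc : ΔC ≫ (ΔC ▷ C) ≫ (α_ C C C).hom = ΔC ≫ (C ◁ ΔC))
    (hC_counit_l : ΔC ≫ (εC ▷ C) ≫ (λ_ C).hom = 𝟙 C)
    (hC_counit_r : ΔC ≫ (C ◁ εC) ≫ (ρ_ C).hom = 𝟙 C)
    -- the `B`-coring `D`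
    (D : b ⟶ b) (ΔD : D ⟶ D ≫ D) (εD : D ⟶ 𝟙 b)
    (hD_coassoc : ΔD ≫ (ΔD ▷ D) ≫ (α_ D D D).hom = ΔD ≫ (D ◁ ΔD))
    (hD_counit_l : ΔD ≫ (εD ▷ D) ≫ (λ_ D).hom = 𝟙 D)
    (hD_counit_r : ΔD ≫ (D ◁ εD) ≫ (ρ_ D).hom = 𝟙 D)
    -- the 1-cells `(M, m)` and `(N, n)`
    (M : a ⟶ b) (m : C ≫ M ⟶ M ≫ D)
    (hm1 : m ≫ (M ◁ εD) ≫ (ρ_ M).hom = (εC ▷ M) ≫ (λ_ M).hom)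
    (hm2 : (ΔC ▷ M) ≫ (α_ C C M).hom ≫ (C ◁ m) ≫ (α_ C M D).inv ≫ (m ▷ D) ≫
      (α_ M D D).hom = m ≫ (M ◁ ΔD))
    (N : b ⟶ a) (n : D ≫ N ⟶ N ≫ C)
    (hn1 : n ≫ (N ◁ εC) ≫ (ρ_ N).hom = (εD ▷ N) ≫ (λ_ N).hom)
    (hn2 : (ΔD ▷ N) ≫ (α_ D D N).hom ≫ (D ◁ n) ≫ (α_ D N C).inv ≫ (n ▷ C) ≫
      (α_ N C C).hom = n ≫ (N ◁ ΔC))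
    -- the 2-cells `η` and `ρ` of the wide right Morita context
    (η : C ≫ (M ≫ N) ⟶ 𝟙 a) (ρ : D ≫ (N ≫ M) ⟶ 𝟙 b)
    -- equation (I-1)
    (hI1 : (ΔC ▷ (M ≫ N)) ≫ (α_ C C (M ≫ N)).hom ≫ (C ◁ midmap m n) ≫
        (α_ C (M ≫ N) C).inv ≫ (η ▷ C) ≫ (λ_ C).hom =
      (ΔC ▷ (M ≫ N)) ≫ (α_ C C (M ≫ N)).hom ≫ (C ◁ η) ≫ (ρ_ C).hom)
    -- equation (I-2)
    (hI2 : (ΔD ▷ (N ≫ M)) ≫ (α_ D D (N ≫ M)).hom ≫ (D ◁ midmap n m) ≫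
        (α_ D (N ≫ M) D).inv ≫ (ρ ▷ D) ≫ (λ_ D).hom =
      (ΔD ▷ (N ≫ M)) ≫ (α_ D D (N ≫ M)).hom ≫ (D ◁ ρ) ≫ (ρ_ D).hom)
    -- equation (II-1)
    (hII1 : (η ▷ M) ≫ (λ_ M).hom =
      (α_ C (M ≫ N) M).hom ≫ (C ◁ (α_ M N M).hom) ≫ (α_ C M (N ≫ M)).inv ≫
        (m ▷ (N ≫ M)) ≫ (α_ M D (N ≫ M)).hom ≫ (M ◁ ρ) ≫ (ρ_ M).hom)
    -- equation (II-2)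
    (hII2 : (ρ ▷ N) ≫ (λ_ N).hom =
      (α_ D (N ≫ M) N).hom ≫ (D ◁ (α_ N M N).hom) ≫ (α_ D N (M ≫ N)).inv ≫
        (n ▷ (M ≫ N)) ≫ (α_ N C (M ≫ N)).hom ≫ (N ◁ η) ≫ (ρ_ N).hom)
    -- a right `C`-comodule `(X, ρ^X)`
    (X : z ⟶ a) (x : X ⟶ X ≫ C)
    (hx_counit : x ≫ (X ◁ εC) ≫ (ρ_ X).hom = 𝟙 X)
    (hx_coassoc : x ≫ (x ▷ C) ≫ (α_ X C C).hom = x ≫ (X ◁ ΔC)) :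
    -- the 2-cell `η̃_X` ...
    letI etaX : X ≫ (M ≫ N) ⟶ X :=
      (x ▷ (M ≫ N)) ≫ (α_ X C (M ≫ N)).hom ≫ (X ◁ η) ≫ (ρ_ X).hom
    -- ... is right `C`-colinear for the push-out coaction on `X ≫ (M ≫ N)`:
    letI rXMN : X ≫ (M ≫ N) ⟶ (X ≫ (M ≫ N)) ≫ C :=
      (x ▷ (M ≫ N)) ≫ (α_ X C (M ≫ N)).hom ≫ (X ◁ midmap m n) ≫
        (α_ X (M ≫ N) C).inv
    etaX ≫ x = rXMN ≫ (etaX ▷ C) :=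
  wideMorita_stmt12_general C ΔC D M m N n η hI1 X x hx_coassoc
end

section
/- Let C be an A-coring, D a B-coring, and Γ = ((M,m),(N,n),η,ρ) a wide right Morita context in REM(Bim) from (D:B) to (C:A). Let M : Comod_C → Comod_D and N : Comod_D → Comod_C be the push-out functors X ↦ X ⊗_A M and Y ↦ Y ⊗_B N, and define natural transformations η̃ : N∘M ⟶ Id and ρ̃ : M∘N ⟶ Id as in the paper. Then for every right D-comodule Y, η̃_{N(Y)} = N(ρ̃_Y), and for every right C-comodule X, ρ̃_{M(X)} = M(η̃_X). Hence (M, N, η̃, ρ̃) is a wide right Morita context between Comod_C and Comod_D. -/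
/-!
Both identities are the whiskered forms of the axioms (II-2) and (II-1): for a comodule `(Y, ρ^Y)`,
`η̃_{Y ⊗ N}` is `Y ⊗ (N ⊗ η)(n ⊗ M ⊗ N)` precomposed with `ρ^Y ⊗ N ⊗ M ⊗ N`, while `ρ̃_Y ⊗ N` is
`Y ⊗ (ρ ⊗ N)` precomposed with the same map, and (II-2) identifies the two bracketed 2-cells.
-/

open CategoryTheory Bicategory

namespace WideMoritaContext

variable {𝔅 : Type*} [Bicategory 𝔅] {a b z : 𝔅} {C : a ⟶ a} {D : b ⟶ b}

def pushoutCoaction {N : b ⟶ a} (Y : z ⟶ b) (ry : Y ⟶ Y ≫ D) (n : D ≫ N ⟶ N ≫ C) :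
    Y ≫ N ⟶ (Y ≫ N) ≫ C :=
  (ry ▷ N) ≫ (α_ Y D N).hom ≫ (Y ◁ n) ≫ (α_ Y N C).inv

/-- `η̃_X` for `P = M ⊗ N`, and `ρ̃_Y` with the roles of the two corings exchanged. -/
def inducedCounit {P : a ⟶ a} (X : z ⟶ a) (rx : X ⟶ X ≫ C) (η : C ≫ P ⟶ 𝟙 a) :
    X ≫ P ⟶ X :=
  (rx ▷ P) ≫ (α_ X C P).hom ≫ (X ◁ η) ≫ (ρ_ X).hom

theorem inducedCounit_pushoutCoaction {M : a ⟶ b} {N : b ⟶ a}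
    (n : D ≫ N ⟶ N ≫ C) (η : C ≫ (M ≫ N) ⟶ 𝟙 a) (ρ : D ≫ (N ≫ M) ⟶ 𝟙 b)
    (hII : (ρ ▷ N) ≫ (λ_ N).hom =
      (α_ D (N ≫ M) N).hom ≫ (D ◁ (α_ N M N).hom) ≫ (α_ D N (M ≫ N)).inv ≫
        (n ▷ (M ≫ N)) ≫ (α_ N C (M ≫ N)).hom ≫ (N ◁ η) ≫ (ρ_ N).hom)
    (Y : z ⟶ b) (ry : Y ⟶ Y ≫ D) :
    inducedCounit (Y ≫ N) (pushoutCoaction Y ry n) η =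
      (α_ Y N (M ≫ N)).hom ≫ (Y ◁ (α_ N M N).inv) ≫ (α_ Y (N ≫ M) N).inv ≫
        (inducedCounit Y ry ρ ▷ N) := by
  unfold inducedCounit pushoutCoaction
  calc _ = (α_ Y N (M ≫ N)).hom ≫ (ry ▷ (N ≫ (M ≫ N))) ≫ (α_ Y D (N ≫ (M ≫ N))).hom ≫
          (Y ◁ ((D ◁ (α_ N M N).inv) ≫ (α_ D (N ≫ M) N).inv ≫
            ((α_ D (N ≫ M) N).hom ≫ (D ◁ (α_ N M N).hom) ≫ (α_ D N (M ≫ N)).inv ≫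
              (n ▷ (M ≫ N)) ≫ (α_ N C (M ≫ N)).hom ≫ (N ◁ η) ≫ (ρ_ N).hom))) := by
        bicategory
    _ = (α_ Y N (M ≫ N)).hom ≫ (ry ▷ (N ≫ (M ≫ N))) ≫ (α_ Y D (N ≫ (M ≫ N))).hom ≫
          (Y ◁ ((D ◁ (α_ N M N).inv) ≫ (α_ D (N ≫ M) N).inv ≫ ((ρ ▷ N) ≫ (λ_ N).hom))) := by
        rw [hII]
    _ = _ := by bicategory

end WideMoritaContext

theorem wideMorita_stmt13_general {𝔅 : Type*} [Bicategory 𝔅] {a b : 𝔅}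
    -- the `A`-coring `C`
    (C : a ⟶ a) (ΔC : C ⟶ C ≫ C) (εC : C ⟶ 𝟙 a)
    -- the `B`-coring `D`
    (D : b ⟶ b) (ΔD : D ⟶ D ≫ D) (εD : D ⟶ 𝟙 b)
    -- the 1-cells `(M, m)` and `(N, n)`
    (M : a ⟶ b) (m : C ≫ M ⟶ M ≫ D)
    (N : b ⟶ a) (n : D ≫ N ⟶ N ≫ C)
    -- the 2-cells `η` and `ρ` of the wide right Morita context
    (η : C ≫ (M ≫ N) ⟶ 𝟙 a) (ρ : D ≫ (N ≫ M) ⟶ 𝟙 b)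
    (hII1 : (η ▷ M) ≫ (λ_ M).hom =
      (α_ C (M ≫ N) M).hom ≫ (C ◁ (α_ M N M).hom) ≫ (α_ C M (N ≫ M)).inv ≫
        (m ▷ (N ≫ M)) ≫ (α_ M D (N ≫ M)).hom ≫ (M ◁ ρ) ≫ (ρ_ M).hom)
    (hII2 : (ρ ▷ N) ≫ (λ_ N).hom =
      (α_ D (N ≫ M) N).hom ≫ (D ◁ (α_ N M N).hom) ≫ (α_ D N (M ≫ N)).inv ≫
        (n ▷ (M ≫ N)) ≫ (α_ N C (M ≫ N)).hom ≫ (N ◁ η) ≫ (ρ_ N).hom) :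
    -- (a) for every right `D`-comodule `(Y, ρ^Y)`:  η̃_{𝓝(Y)} = 𝓝(ρ̃_Y)
    (∀ (z' : 𝔅) (Y : z' ⟶ b) (ry : Y ⟶ Y ≫ D),
      (ry ≫ (Y ◁ εD) ≫ (ρ_ Y).hom = 𝟙 Y) →
      (ry ≫ (ry ▷ D) ≫ (α_ Y D D).hom = ry ≫ (Y ◁ ΔD)) →
      ((((ry ▷ N) ≫ (α_ Y D N).hom ≫ (Y ◁ n) ≫ (α_ Y N C).inv) ▷ (M ≫ N)) ≫
          (α_ (Y ≫ N) C (M ≫ N)).hom ≫ ((Y ≫ N) ◁ η) ≫ (ρ_ (Y ≫ N)).hom =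
        (α_ Y N (M ≫ N)).hom ≫ (Y ◁ (α_ N M N).inv) ≫ (α_ Y (N ≫ M) N).inv ≫
          (((ry ▷ (N ≫ M)) ≫ (α_ Y D (N ≫ M)).hom ≫ (Y ◁ ρ) ≫ (ρ_ Y).hom) ▷ N))) ∧
    -- (b) for every right `C`-comodule `(X, ρ^X)`:  ρ̃_{𝓜(X)} = 𝓜(η̃_X)
    (∀ (z : 𝔅) (X : z ⟶ a) (rx : X ⟶ X ≫ C),
      (rx ≫ (X ◁ εC) ≫ (ρ_ X).hom = 𝟙 X) →
      (rx ≫ (rx ▷ C) ≫ (α_ X C C).hom = rx ≫ (X ◁ ΔC)) →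
      ((((rx ▷ M) ≫ (α_ X C M).hom ≫ (X ◁ m) ≫ (α_ X M D).inv) ▷ (N ≫ M)) ≫
          (α_ (X ≫ M) D (N ≫ M)).hom ≫ ((X ≫ M) ◁ ρ) ≫ (ρ_ (X ≫ M)).hom =
        (α_ X M (N ≫ M)).hom ≫ (X ◁ (α_ M N M).inv) ≫ (α_ X (M ≫ N) M).inv ≫
          (((rx ▷ (M ≫ N)) ≫ (α_ X C (M ≫ N)).hom ≫ (X ◁ η) ≫ (ρ_ X).hom) ▷ M))) :=
  ⟨fun _ Y ry _ _ => WideMoritaContext.inducedCounit_pushoutCoaction n η ρ hII2 Y ry,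
    fun _ X rx _ _ => WideMoritaContext.inducedCounit_pushoutCoaction m ρ η hII1 X rx⟩

theorem wideMorita_stmt13 {𝔅 : Type*} [Bicategory 𝔅] {a b : 𝔅}
    -- the `A`-coring `C`
    (C : a ⟶ a) (ΔC : C ⟶ C ≫ C) (εC : C ⟶ 𝟙 a)
    (hC_coassoc : ΔC ≫ (ΔC ▷ C) ≫ (α_ C C C).hom = ΔC ≫ (C ◁ ΔC))
    (hC_counit_l : ΔC ≫ (εC ▷ C) ≫ (λ_ C).hom = 𝟙 C)
    (hC_counit_r : ΔC ≫ (C ◁ εC) ≫ (ρ_ C).hom = 𝟙 C)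
    -- the `B`-coring `D`
    (D : b ⟶ b) (ΔD : D ⟶ D ≫ D) (εD : D ⟶ 𝟙 b)
    (hD_coassoc : ΔD ≫ (ΔD ▷ D) ≫ (α_ D D D).hom = ΔD ≫ (D ◁ ΔD))
    (hD_counit_l : ΔD ≫ (εD ▷ D) ≫ (λ_ D).hom = 𝟙 D)
    (hD_counit_r : ΔD ≫ (D ◁ εD) ≫ (ρ_ D).hom = 𝟙 D)
    -- the 1-cells `(M, m)` and `(N, n)`
    (M : a ⟶ b) (m : C ≫ M ⟶ M ≫ D)
    (hm1 : m ≫ (M ◁ εD) ≫ (ρ_ M).hom = (εC ▷ M) ≫ (λ_ M).hom)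
    (hm2 : (ΔC ▷ M) ≫ (α_ C C M).hom ≫ (C ◁ m) ≫ (α_ C M D).inv ≫ (m ▷ D) ≫
      (α_ M D D).hom = m ≫ (M ◁ ΔD))
    (N : b ⟶ a) (n : D ≫ N ⟶ N ≫ C)
    (hn1 : n ≫ (N ◁ εC) ≫ (ρ_ N).hom = (εD ▷ N) ≫ (λ_ N).hom)
    (hn2 : (ΔD ▷ N) ≫ (α_ D D N).hom ≫ (D ◁ n) ≫ (α_ D N C).inv ≫ (n ▷ C) ≫
      (α_ N C C).hom = n ≫ (N ◁ ΔC))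
    -- the 2-cells `η` and `ρ` of the wide right Morita context
    (η : C ≫ (M ≫ N) ⟶ 𝟙 a) (ρ : D ≫ (N ≫ M) ⟶ 𝟙 b)
    (hI1 : (ΔC ▷ (M ≫ N)) ≫ (α_ C C (M ≫ N)).hom ≫ (C ◁ midmap m n) ≫
        (α_ C (M ≫ N) C).inv ≫ (η ▷ C) ≫ (λ_ C).hom =
      (ΔC ▷ (M ≫ N)) ≫ (α_ C C (M ≫ N)).hom ≫ (C ◁ η) ≫ (ρ_ C).hom)
    (hI2 : (ΔD ▷ (N ≫ M)) ≫ (α_ D D (N ≫ M)).hom ≫ (D ◁ midmap n m) ≫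
        (α_ D (N ≫ M) D).inv ≫ (ρ ▷ D) ≫ (λ_ D).hom =
      (ΔD ▷ (N ≫ M)) ≫ (α_ D D (N ≫ M)).hom ≫ (D ◁ ρ) ≫ (ρ_ D).hom)
    (hII1 : (η ▷ M) ≫ (λ_ M).hom =
      (α_ C (M ≫ N) M).hom ≫ (C ◁ (α_ M N M).hom) ≫ (α_ C M (N ≫ M)).inv ≫
        (m ▷ (N ≫ M)) ≫ (α_ M D (N ≫ M)).hom ≫ (M ◁ ρ) ≫ (ρ_ M).hom)
    (hII2 : (ρ ▷ N) ≫ (λ_ N).hom =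
      (α_ D (N ≫ M) N).hom ≫ (D ◁ (α_ N M N).hom) ≫ (α_ D N (M ≫ N)).inv ≫
        (n ▷ (M ≫ N)) ≫ (α_ N C (M ≫ N)).hom ≫ (N ◁ η) ≫ (ρ_ N).hom) :
    -- (a) for every right `D`-comodule `(Y, ρ^Y)`:  η̃_{𝓝(Y)} = 𝓝(ρ̃_Y)
    (∀ (z' : 𝔅) (Y : z' ⟶ b) (ry : Y ⟶ Y ≫ D),
      (ry ≫ (Y ◁ εD) ≫ (ρ_ Y).hom = 𝟙 Y) →
      (ry ≫ (ry ▷ D) ≫ (α_ Y D D).hom = ry ≫ (Y ◁ ΔD)) →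
      ((((ry ▷ N) ≫ (α_ Y D N).hom ≫ (Y ◁ n) ≫ (α_ Y N C).inv) ▷ (M ≫ N)) ≫
          (α_ (Y ≫ N) C (M ≫ N)).hom ≫ ((Y ≫ N) ◁ η) ≫ (ρ_ (Y ≫ N)).hom =
        (α_ Y N (M ≫ N)).hom ≫ (Y ◁ (α_ N M N).inv) ≫ (α_ Y (N ≫ M) N).inv ≫
          (((ry ▷ (N ≫ M)) ≫ (α_ Y D (N ≫ M)).hom ≫ (Y ◁ ρ) ≫ (ρ_ Y).hom) ▷ N))) ∧
    -- (b) for every right `C`-comodule `(X, ρ^X)`:  ρ̃_{𝓜(X)} = 𝓜(η̃_X)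
    (∀ (z : 𝔅) (X : z ⟶ a) (rx : X ⟶ X ≫ C),
      (rx ≫ (X ◁ εC) ≫ (ρ_ X).hom = 𝟙 X) →
      (rx ≫ (rx ▷ C) ≫ (α_ X C C).hom = rx ≫ (X ◁ ΔC)) →
      ((((rx ▷ M) ≫ (α_ X C M).hom ≫ (X ◁ m) ≫ (α_ X M D).inv) ▷ (N ≫ M)) ≫
          (α_ (X ≫ M) D (N ≫ M)).hom ≫ ((X ≫ M) ◁ ρ) ≫ (ρ_ (X ≫ M)).hom =
        (α_ X M (N ≫ M)).hom ≫ (X ◁ (α_ M N M).inv) ≫ (α_ X (M ≫ N) M).inv ≫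
          (((rx ▷ (M ≫ N)) ≫ (α_ X C (M ≫ N)).hom ≫ (X ◁ η) ≫ (ρ_ X).hom) ▷ M))) :=
  wideMorita_stmt13_general C ΔC εC D ΔD εD M m N n η ρ hII1 hII2
end

section
/- Let (F, Φ) : B → B' be a homomorphism of bicategories (so Φ¹ : F(f) ≫ F(g) ≅ F(f ≫ g) and Φ⁰ : 𝟙_{F(A)} ≅ F(𝟙 A) are invertible). If Γ = (f, g, η, ρ) is a wide right Morita context from B₀ to A₀ in B, then (F(f), F(g), η', ρ') is a wide right Morita context from F(B₀) to F(A₀) in B', where η' = (Φ⁰)⁻¹ ∘ F(η) ∘ Φ¹ and ρ' = (Φ⁰)⁻¹ ∘ F(ρ) ∘ Φ¹. -/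
/-!
STATEMENT 14: A homomorphism of bicategories (pseudofunctor) (F, Φ) sends a
wide right Morita context (f, g, η, ρ) to a wide right Morita context
(F(f), F(g), (Φ⁰)⁻¹ ∘ F(η) ∘ Φ¹, (Φ⁰)⁻¹ ∘ F(ρ) ∘ Φ¹).  In Mathlib's
`Pseudofunctor`, Φ¹ = (F.mapComp _ _).inv and (Φ⁰)⁻¹ = (F.mapId _).hom.
-/

open CategoryTheory Bicategory

theorem wideMorita_stmt14 {B B' : Type*} [Bicategory B] [Bicategory B']
    (F : Pseudofunctor B B') {a b : B} {f : a ⟶ b} {g : b ⟶ a}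
    (η : f ≫ g ⟶ 𝟙 a) (ρ : g ≫ f ⟶ 𝟙 b) (hΓ : IsWRMC f g η ρ) :
    IsWRMC (F.map f) (F.map g)
      ((F.mapComp f g).inv ≫ F.map₂ η ≫ (F.mapId a).hom)
      ((F.mapComp g f).inv ≫ F.map₂ ρ ≫ (F.mapId b).hom) := by
  obtain ⟨h1, h2⟩ := hΓ
  constructor
  · replace h1 := congrArg F.map₂ h1
    simp only [PrelaxFunctor.map₂_comp, F.map₂_whisker_right, F.map₂_whisker_left,
      F.map₂_associator, F.map₂_left_unitor, F.map₂_right_unitor, Category.assoc] at h1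
    simp only [Bicategory.comp_whiskerRight, Bicategory.whiskerLeft_comp, Category.assoc]
    simp only [Iso.cancel_iso_hom_left, Iso.inv_hom_id_assoc] at h1
    rw [← cancel_epi ((F.mapComp g f).hom ▷ F.map g)]
    simp only [hom_inv_whiskerRight_assoc, Iso.hom_inv_id_assoc]
    simpa only [Category.assoc, Iso.inv_hom_id_assoc, Iso.cancel_iso_hom_left] using h1
  · replace h2 := congrArg F.map₂ h2
    simp only [PrelaxFunctor.map₂_comp, F.map₂_whisker_right, F.map₂_whisker_left,
      F.map₂_associator, F.map₂_left_unitor, F.map₂_right_unitor, Category.assoc] at h2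
    simp only [Bicategory.comp_whiskerRight, Bicategory.whiskerLeft_comp, Category.assoc]
    simp only [Iso.cancel_iso_hom_left, Iso.inv_hom_id_assoc] at h2
    rw [← cancel_epi ((F.mapComp f g).hom ▷ F.map f)]
    simpa only [hom_inv_whiskerRight_assoc, Iso.hom_inv_id_assoc, Category.assoc] using h2
end
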